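/- arXiv:2501.08849 — 3 statements merged into one kernel-verified Lean document; each statement's English description precedes it below -/
import Mathlib

section
/- If a q-periodic symplectic billiard orbit in the ellipse parametrized by e_{a,b} consists of the equidistributed points t_j = t_0 + 2πAj/q for j = 0,…,q-1 (with A = (ab)^{1/3}), then its action equals A³ q sin(2π/q). -/
/-! The standard area form of two points of the ellipse with angles `x` and `y` is
`a b sin (y - x)`, and `A³ = a b`. Consecutive equidistributed parameters differ by `2π A / q`,
i.e. by the angle `2π / q`, except at the wrap-around `q - 1 → 0`, where the difference is
`2π / q - 2π`; by periodicity of `sin` every one of the `q` terms equals `A³ sin (2π / q)`. -/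

open Real Function

theorem cross_ellipse_points (a b x y : ℝ) :
    a * cos x * (b * sin y) - b * sin x * (a * cos y) = a * b * sin (y - x) := by
  rw [sin_sub]
  ring

theorem Function.Periodic.map_equidistributed_step {α : Type*} {f : ℝ → α}
    (hf : Periodic f (2 * π)) (q j : ℕ) :
    f (2 * π * ((j + 1) % q : ℕ) / q - 2 * π * j / q) = f (2 * π / q) := by
  rcases Nat.eq_zero_or_pos q with rfl | hq
  · simp
  have hmod : (((j + 1) % q : ℕ) : ℝ) = j + 1 - q * ((j + 1) / q : ℕ) := by
    rw [eq_sub_iff_add_eq, ← Nat.cast_add_one, ← Nat.cast_mul, ← Nat.cast_add, Nat.mod_add_div]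
  have hstep : 2 * π * ((j + 1) % q : ℕ) / q - 2 * π * j / q
      = 2 * π / q - ((j + 1) / q : ℕ) * (2 * π) := by
    rw [hmod]
    field_simp
    ring
  rw [hstep, hf.sub_nat_mul_eq]

theorem rpow_one_div_three_pow_three {x : ℝ} (hx : 0 ≤ x) : (x ^ ((1 : ℝ) / 3)) ^ 3 = x := by
  rw [← rpow_natCast, ← rpow_mul hx]
  norm_num

theorem stmt1_general (a b : ℝ) (ha : 0 < a) (hb : 0 < b)
    (A : ℝ) (hA : A = (a * b) ^ ((1:ℝ)/3))
    (e : ℝ → ℝ × ℝ) (he : ∀ t, e t = (a * Real.cos (t / A), b * Real.sin (t / A)))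
    (ω : ℝ × ℝ → ℝ × ℝ → ℝ) (hω : ∀ u v, ω u v = u.1 * v.2 - u.2 * v.1)
    (q : ℕ) (t0 : ℝ)
    (t : ℕ → ℝ) (ht : ∀ j, t j = t0 + 2 * π * A * j / q) :
    ∑ j ∈ Finset.range q, ω (e (t j)) (e (t ((j + 1) % q))) =
      A ^ 3 * q * Real.sin (2 * π / q) := by
  have hab : 0 < a * b := mul_pos ha hb
  have hA0 : A ≠ 0 := hA ▸ (rpow_pos_of_pos hab _).ne'
  have hA3 : A ^ 3 = a * b := hA ▸ rpow_one_div_three_pow_three hab.le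
  have hterm : ∀ j, ω (e (t j)) (e (t ((j + 1) % q))) = A ^ 3 * sin (2 * π / q) := by
    intro j
    rw [hω, he, he, cross_ellipse_points, ← hA3,
      ← sin_periodic.map_equidistributed_step q j, ht, ht]
    congr 2
    field_simp
    ring
  simp only [hterm, Finset.sum_const, Finset.card_range, nsmul_eq_mul]
  ring

theorem stmt1 (a b : ℝ) (ha : 0 < a) (hb : 0 < b)
    (A : ℝ) (hA : A = (a * b) ^ ((1:ℝ)/3))
    (e : ℝ → ℝ × ℝ) (he : ∀ t, e t = (a * Real.cos (t / A), b * Real.sin (t / A)))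
    (ω : ℝ × ℝ → ℝ × ℝ → ℝ) (hω : ∀ u v, ω u v = u.1 * v.2 - u.2 * v.1)
    (q : ℕ) (hq : 3 ≤ q) (t0 : ℝ)
    (t : ℕ → ℝ) (ht : ∀ j, t j = t0 + 2 * π * A * j / q) :
    ∑ j ∈ Finset.range q, ω (e (t j)) (e (t ((j + 1) % q))) =
      A ^ 3 * q * Real.sin (2 * π / q) :=
  stmt1_general a b ha hb A hA e he ω hω q t0 t ht
end

section
/- Let Ω be the domain bounded by γ(t) = (1 + n(t)) e_{a,b}(t) with A = (ab)^{1/3} and n a 2πA-periodic C¹ function. Then area(Ω) ≤ π A³ (1 + ‖n‖_{C¹})², where ‖n‖_{C¹} = sup|n| + sup|n′|. -/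
/-!
`Ω` lies in the image of the disc of radius `1 + sup |n|` under the linear map
`diag(a, b)`, which multiplies area by `a * b = A ^ 3`; and `sup |n| ≤ ‖n‖_{C¹}`.
-/

open Real MeasureTheory

def diskProd (r : ℝ) : Set (ℝ × ℝ) := {p | p.1 ^ 2 + p.2 ^ 2 ≤ r ^ 2}

def scaleProd (a b : ℝ) : ℝ × ℝ →ₗ[ℝ] ℝ × ℝ := (a • LinearMap.id).prodMap (b • LinearMap.id)

lemma measurableSet_diskProd (r : ℝ) : MeasurableSet (diskProd r) :=
  (isClosed_le (by fun_prop) continuous_const).measurableSet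

lemma preimage_equivRealProd_diskProd {r : ℝ} (hr : 0 ≤ r) :
    Complex.measurableEquivRealProd ⁻¹' diskProd r = Metric.closedBall 0 r := by
  ext z
  change z.re ^ 2 + z.im ^ 2 ≤ r ^ 2 ↔ z ∈ Metric.closedBall (0 : ℂ) r
  rw [mem_closedBall_zero_iff, ← pow_le_pow_iff_left₀ (norm_nonneg z) hr two_ne_zero,
    Complex.sq_norm, Complex.normSq_apply]
  ring_nf

lemma volume_diskProd {r : ℝ} (hr : 0 ≤ r) :
    volume (diskProd r) = ENNReal.ofReal (π * r ^ 2) := by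
  rw [← Complex.volume_preserving_equiv_real_prod.measure_preimage
      (measurableSet_diskProd r).nullMeasurableSet,
    preimage_equivRealProd_diskProd hr, Complex.volume_closedBall, ← ENNReal.ofReal_pow hr,
    ← ENNReal.ofReal_coe_nnreal, NNReal.coe_real_pi, ← ENNReal.ofReal_mul (sq_nonneg r), mul_comm]

lemma det_scaleProd (a b : ℝ) : LinearMap.det (scaleProd a b) = a * b := by
  simp [scaleProd, LinearMap.det_prodMap]

lemma volume_scaleProd_image_diskProd (a b : ℝ) {r : ℝ} (hr : 0 ≤ r) :
    volume (scaleProd a b '' diskProd r) = ENNReal.ofReal (|a * b| * (π * r ^ 2)) := by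
  rw [Measure.addHaar_image_linearMap, det_scaleProd, volume_diskProd hr,
    ← ENNReal.ofReal_mul (abs_nonneg _)]

lemma smul_ellipse_mem_scaleProd_image_diskProd (a b θ : ℝ) {r s : ℝ} (hs : |s| ≤ r) :
    s • (a * cos θ, b * sin θ) ∈ scaleProd a b '' diskProd r := by
  refine ⟨(s * cos θ, s * sin θ), ?_, ?_⟩
  · change (s * cos θ) ^ 2 + (s * sin θ) ^ 2 ≤ r ^ 2
    have hpyth : (s * cos θ) ^ 2 + (s * sin θ) ^ 2 = s ^ 2 := by
      linear_combination s ^ 2 * cos_sq_add_sin_sq θ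
    rw [hpyth, ← sq_abs]
    exact pow_le_pow_left₀ (abs_nonneg s) hs 2
  · simp only [scaleProd, LinearMap.prodMap_apply, LinearMap.smul_apply, LinearMap.id_coe, id_eq,
      Prod.smul_mk, smul_eq_mul]
    congr 1 <;> ring

lemma abs_le_iSup_abs_of_periodic {n : ℝ → ℝ} {c : ℝ} (hper : Function.Periodic n c) (hc : c ≠ 0)
    (hn : Continuous n) (t : ℝ) : |n t| ≤ ⨆ s, |n s| :=
  le_ciSup ((Function.Periodic.isBounded_of_continuous (fun s => by simp only [hper s]) hc
    hn.abs).bddAbove) t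

theorem stmt10 (a b : ℝ) (ha : 0 < a) (hb : 0 < b)
    (A : ℝ) (hA : A = (a * b) ^ ((1:ℝ)/3))
    (e : ℝ → ℝ × ℝ) (he : ∀ t, e t = (a * Real.cos (t / A), b * Real.sin (t / A)))
    (n : ℝ → ℝ) (hn : ContDiff ℝ 1 n) (hper : Function.Periodic n (2 * π * A))
    (C1 : ℝ) (hC1 : C1 = (⨆ t : ℝ, |n t|) + ⨆ t : ℝ, |deriv n t|)
    (Ω : Set (ℝ × ℝ))
    (hΩ : Ω = {p | ∃ t l : ℝ, l ∈ Set.Icc (0:ℝ) 1 ∧ p = l • ((1 + n t) • e t)}) :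
    MeasureTheory.volume Ω ≤ ENNReal.ofReal (π * A ^ 3 * (1 + C1) ^ 2) := by
  have hab : 0 < a * b := mul_pos ha hb
  have hA3 : A ^ 3 = a * b := by
    rw [hA, one_div, ← Nat.cast_ofNat, rpow_inv_natCast_pow hab.le three_ne_zero]
  have hA0 : 0 < A := by rw [hA]; positivity
  set M := ⨆ t, |n t|
  have hM : ∀ t, |n t| ≤ M :=
    abs_le_iSup_abs_of_periodic hper (by positivity) hn.continuous
  have hMC1 : M ≤ C1 := by
    rw [hC1]
    linarith [Real.iSup_nonneg fun t => abs_nonneg (deriv n t)]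
  have hsub : Ω ⊆ scaleProd a b '' diskProd (1 + M) := by
    rw [hΩ]
    rintro p ⟨t, l, ⟨hl0, hl1⟩, rfl⟩
    rw [he, smul_smul]
    refine smul_ellipse_mem_scaleProd_image_diskProd a b _ ?_
    calc |l * (1 + n t)| = l * |1 + n t| := by rw [abs_mul, abs_of_nonneg hl0]
      _ ≤ 1 * (1 + M) := by
        gcongr
        exact (abs_add_le _ _).trans (by rw [abs_one]; linarith [hM t])
      _ = 1 + M := one_mul _
  have hM0 : 0 ≤ M := (abs_nonneg (n 0)).trans (hM 0)
  calc volume Ω ≤ volume (scaleProd a b '' diskProd (1 + M)) := measure_mono hsub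
    _ = ENNReal.ofReal (|a * b| * (π * (1 + M) ^ 2)) :=
      volume_scaleProd_image_diskProd a b (by linarith)
    _ = ENNReal.ofReal (π * A ^ 3 * (1 + M) ^ 2) := by rw [abs_of_pos hab, hA3]; ring_nf
    _ ≤ ENNReal.ofReal (π * A ^ 3 * (1 + C1) ^ 2) := by gcongr
end

section
/- Let q ≥ 3, A > 0, and let n : ℝ → ℝ be 2πA-periodic and continuous. Suppose the function t₀ ↦ F(t₀) := 2A³ sin(2π/q) Σ_{j=0}^{q-1} n(t₀ + 2πAj/q) differs from a constant c by at most ε in absolute value for all t₀. Then 2qA³ sin(2π/q) |∫₀^{2πA} n(t) e^{iqt/A} dt| ≤ 2πA ε. -/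
/-!
With `ω = q / A`, the exponential `e(t) = exp(iωt)` is unchanged by the shifts `2πAj/q`, so by
periodicity every shifted copy `n(· + 2πAj/q)` has the same Fourier coefficient against `e` as `n`,
and the coefficient of the `q`-fold sum is `q` times that of `n`. Since `e` integrates to zero
over a period, subtracting the constant `c` does not change the coefficient, which is then at most
`ε` times the period.
-/

open Real Function intervalIntegral

section FourierCoefficient

variable {T ω : ℝ}

theorem integral_exp_I_mul_eq_zero (hω : ω ≠ 0) (hT : Complex.exp (Complex.I * ω * T) = 1) :
    ∫ t in (0:ℝ)..T, Complex.exp (Complex.I * ω * t) = 0 := by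
  have hIω : Complex.I * ω ≠ 0 := mul_ne_zero Complex.I_ne_zero (by exact_mod_cast hω)
  rw [integral_exp_mul_complex hIω, hT]
  simp

theorem Function.Periodic.mul_exp_I_mul {n : ℝ → ℂ} (hn : Periodic n T)
    (hT : Complex.exp (Complex.I * ω * T) = 1) :
    Periodic (fun t => n t * Complex.exp (Complex.I * ω * t)) T := by
  intro t
  simp only [hn t, Complex.ofReal_add, mul_add, Complex.exp_add, hT, mul_one]

theorem integral_comp_add_mul_exp_I_mul {n : ℝ → ℂ} (hn : Periodic n T)
    (hT : Complex.exp (Complex.I * ω * T) = 1) {s : ℝ}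
    (hs : Complex.exp (Complex.I * ω * s) = 1) :
    ∫ t in (0:ℝ)..T, n (t + s) * Complex.exp (Complex.I * ω * t) =
      ∫ t in (0:ℝ)..T, n t * Complex.exp (Complex.I * ω * t) := by
  have hshift : ∀ t : ℝ, n (t + s) * Complex.exp (Complex.I * ω * t) =
      n (t + s) * Complex.exp (Complex.I * ω * ↑(t + s)) := by
    intro t
    rw [Complex.ofReal_add, mul_add, Complex.exp_add, hs, mul_one]
  simp_rw [hshift]
  rw [integral_comp_add_right (fun u => n u * Complex.exp (Complex.I * ω * u)), zero_add,
    add_comm, (hn.mul_exp_I_mul hT).intervalIntegral_add_eq s 0, zero_add]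

theorem integral_sum_comp_add_mul_exp_I_mul {n : ℝ → ℂ} (hn : Periodic n T) (hcont : Continuous n)
    (hT : Complex.exp (Complex.I * ω * T) = 1) {q : ℕ}
    (hq : Complex.exp (Complex.I * ω * ↑(T / q)) = 1) :
    ∫ t in (0:ℝ)..T, (∑ j ∈ Finset.range q, n (t + T * j / q)) * Complex.exp (Complex.I * ω * t) =
      q * ∫ t in (0:ℝ)..T, n t * Complex.exp (Complex.I * ω * t) := by
  have hshift (j : ℕ) : Complex.exp (Complex.I * ω * ↑(T * j / q)) = 1 := by
    rw [mul_div_right_comm, Complex.ofReal_mul, Complex.ofReal_natCast, ← mul_assoc,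
      mul_comm _ (j : ℂ), Complex.exp_nat_mul, hq, one_pow]
  simp_rw [Finset.sum_mul]
  rw [integral_finsetSum fun j _ => (by fun_prop : Continuous _).intervalIntegrable _ _]
  simp [integral_comp_add_mul_exp_I_mul hn hT (hshift _)]

theorem integral_sub_const_mul_exp_I_mul (hω : ω ≠ 0) (hT : Complex.exp (Complex.I * ω * T) = 1)
    {g : ℝ → ℂ} (hg : Continuous g) (c : ℂ) :
    ∫ t in (0:ℝ)..T, (g t - c) * Complex.exp (Complex.I * ω * t) =
      ∫ t in (0:ℝ)..T, g t * Complex.exp (Complex.I * ω * t) := by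
  simp_rw [sub_mul]
  rw [integral_sub ((by fun_prop : Continuous _).intervalIntegrable _ _)
    ((by fun_prop : Continuous _).intervalIntegrable _ _), integral_const_mul,
    integral_exp_I_mul_eq_zero hω hT, mul_zero, sub_zero]

theorem norm_integral_mul_exp_I_mul_le_of_abs_sub_le (hω : ω ≠ 0) (hT₀ : 0 ≤ T)
    (hT : Complex.exp (Complex.I * ω * T) = 1) {f : ℝ → ℝ} (hf : Continuous f) {c ε : ℝ}
    (hfc : ∀ t, |f t - c| ≤ ε) :
    ‖∫ t in (0:ℝ)..T, (f t : ℂ) * Complex.exp (Complex.I * ω * t)‖ ≤ ε * T := by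
  rw [← integral_sub_const_mul_exp_I_mul hω hT (by fun_prop) c]
  calc _ ≤ ε * |T - 0| := norm_integral_le_of_norm_le_const fun t _ => by
          rw [norm_mul, mul_assoc, ← Complex.ofReal_mul, Complex.norm_exp_I_mul_ofReal, mul_one,
            ← Complex.ofReal_sub, Complex.norm_real, Real.norm_eq_abs]
          exact hfc t
    _ = ε * T := by rw [sub_zero, abs_of_nonneg hT₀]

end FourierCoefficient

theorem stmt15 (A : ℝ) (hA : 0 < A) (q : ℕ) (hq : 3 ≤ q)
    (n : ℝ → ℝ) (hcont : Continuous n) (hper : Function.Periodic n (2 * π * A))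
    (c ε : ℝ)
    (hF : ∀ t0 : ℝ,
      |2 * A ^ 3 * Real.sin (2 * π / q) *
          (∑ j ∈ Finset.range q, n (t0 + 2 * π * A * j / q)) - c| ≤ ε) :
    2 * q * A ^ 3 * Real.sin (2 * π / q) *
        ‖∫ t in (0:ℝ)..(2 * π * A),
            (n t : ℂ) * Complex.exp (Complex.I * q * t / A)‖ ≤
      2 * π * A * ε := by
  set T : ℝ := 2 * π * A
  set C : ℝ := 2 * A ^ 3 * Real.sin (2 * π / q)
  set ω : ℝ := q / A
  have hA0 : (A : ℂ) ≠ 0 := by exact_mod_cast hA.ne'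
  have hq0 : (q : ℂ) ≠ 0 := by exact_mod_cast (by omega : q ≠ 0)
  have hω : ω ≠ 0 := by positivity
  have hexp (t : ℝ) :
      Complex.exp (Complex.I * q * t / A) = Complex.exp (Complex.I * ω * t) := by
    push_cast [ω]; ring_nf
  have hT : Complex.exp (Complex.I * ω * T) = 1 := by
    rw [← Complex.exp_nat_mul_two_pi_mul_I q]; congr 1; push_cast [T, ω]; field_simp
  have hTq : Complex.exp (Complex.I * ω * ↑(T / q)) = 1 := by
    rw [← Complex.exp_two_pi_mul_I]; congr 1; push_cast [T, ω]; field_simp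
  have hcoeff : ∫ t in (0:ℝ)..T,
      ((C * ∑ j ∈ Finset.range q, n (t + T * j / q) : ℝ) : ℂ) * Complex.exp (Complex.I * ω * t) =
      C * q * ∫ t in (0:ℝ)..T, (n t : ℂ) * Complex.exp (Complex.I * ω * t) := by
    rw [mul_assoc, ← integral_sum_comp_add_mul_exp_I_mul
      (n := fun t => (n t : ℂ)) (hper.comp Complex.ofReal) (by fun_prop) hT hTq, ← integral_const_mul]
    congr with t
    rw [← mul_assoc, ← Complex.ofReal_sum, ← Complex.ofReal_mul]
  calc _ ≤ |C| * q * ‖∫ t in (0:ℝ)..T, (n t : ℂ) * Complex.exp (Complex.I * ω * t)‖ := by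
        simp_rw [hexp]
        rw [show 2 * (q : ℝ) * A ^ 3 * Real.sin (2 * π / q) = C * q by ring]
        gcongr
        exact le_abs_self _
    _ = ‖∫ t in (0:ℝ)..T,
          ((C * ∑ j ∈ Finset.range q, n (t + T * j / q) : ℝ) : ℂ) *
            Complex.exp (Complex.I * ω * t)‖ := by
        rw [hcoeff, norm_mul, norm_mul, Complex.norm_real, Complex.norm_natCast, Real.norm_eq_abs]
    _ ≤ ε * T := norm_integral_mul_exp_I_mul_le_of_abs_sub_le hω (by positivity) hT
        (by fun_prop) hF
    _ = 2 * π * A * ε := mul_comm _ _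
end
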